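/- For every real x ≥ 0 and every real ν ≥ 0, the modified Bessel functions of the first kind satisfy I_{ν+1}(x)² ≥ I_ν(x) I_{ν+2}(x) (the Turán-type inequality), and consequently the Barut–Girardello Mandel parameter Q = α[I_{2ς+1}(2α)/I_{2ς}(2α) − I_{2ς}(2α)/I_{2ς−1}(2α)] is ≤ 0 for all α > 0 and ς ≥ 1/2. -/
import Mathlib


/-- The modified Bessel function of the first kind,
`I_ν(x) = ∑_k (x/2)^{2k+ν}/(k! Γ(k+ν+1))` (real powers, for `x ≥ 0`). -/
noncomputable def besselI (ν x : ℝ) : ℝ :=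
  ∑' k : ℕ, (x / 2) ^ ((2 * k : ℝ) + ν) / ((k.factorial : ℝ) * Real.Gamma ((k : ℝ) + ν + 1))

open Finset

private lemma pairing (ν : ℝ) (u : ℕ → ℝ) (hpos : ∀ j, 0 < u j)
    (hrec : ∀ j, u j = ((j : ℝ) + ν + 1) * u (j + 1)) (k m : ℕ) :
    0 ≤ (1 / ((k.factorial : ℝ) * (m + 1).factorial)
          - 1 / (((k + 1).factorial : ℝ) * m.factorial)) * (u (k + 1) * u (m + 2))
      + (1 / ((m.factorial : ℝ) * (k + 1).factorial)
          - 1 / (((m + 1).factorial : ℝ) * k.factorial)) * (u (m + 1) * u (k + 2)) := by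
  have e1 : u (k + 1) = ((k : ℝ) + ν + 2) * u (k + 2) := by rw [hrec (k + 1)]; push_cast; ring
  have e2 : u (m + 1) = ((m : ℝ) + ν + 2) * u (m + 2) := by rw [hrec (m + 1)]; push_cast; ring
  have hk : (0:ℝ) < k.factorial := by exact_mod_cast k.factorial_pos
  have hm : (0:ℝ) < m.factorial := by exact_mod_cast m.factorial_pos
  have hk1 : ((k+1).factorial : ℝ) = (k + 1) * k.factorial := by
    rw [Nat.factorial_succ]; push_cast; ring
  have hm1 : ((m+1).factorial : ℝ) = (m + 1) * m.factorial := by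
    rw [Nat.factorial_succ]; push_cast; ring
  have key : (1 / ((k.factorial : ℝ) * (m + 1).factorial)
          - 1 / (((k + 1).factorial : ℝ) * m.factorial)) * (u (k + 1) * u (m + 2))
      + (1 / ((m.factorial : ℝ) * (k + 1).factorial)
          - 1 / (((m + 1).factorial : ℝ) * k.factorial)) * (u (m + 1) * u (k + 2))
      = ((k : ℝ) - m) ^ 2 * (u (k + 2) * u (m + 2))
          / (((k + 1) * k.factorial) * ((m + 1) * m.factorial)) := by
    rw [e1, e2, hk1, hm1]
    field_simp
    ring
  rw [key]
  have h1 := (hpos (k+2)).le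
  have h2 := (hpos (m+2)).le
  have hd : (0:ℝ) < ((k + 1) * k.factorial) * ((m + 1) * m.factorial) := by positivity
  apply div_nonneg _ hd.le
  positivity

private lemma core (ν : ℝ) (u : ℕ → ℝ) (hpos : ∀ j, 0 < u j)
    (hrec : ∀ j, u j = ((j : ℝ) + ν + 1) * u (j + 1)) (hν : 0 ≤ ν) (n : ℕ) :
    ∑ k ∈ range (n + 1), u k * u (n + 2 - k) / ((k.factorial : ℝ) * (n - k).factorial)
      ≤ ∑ k ∈ range (n + 1),
          u (k + 1) * u (n + 1 - k) / ((k.factorial : ℝ) * (n - k).factorial) := by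
  set T : ℕ → ℝ := fun k =>
    (1 / ((k.factorial : ℝ) * (n - k).factorial)
      - 1 / (((k + 1).factorial : ℝ) * (n - 1 - k).factorial)) * (u (k + 1) * u (n + 1 - k))
    with hT
  -- the middle sum is nonnegative
  have hM : 0 ≤ ∑ k ∈ range n, T k := by
    have h2 : (∑ k ∈ range n, T k) + ∑ k ∈ range n, T k
        = ∑ k ∈ range n, (T k + T (n - 1 - k)) := by
      rw [Finset.sum_add_distrib]
      congr 1
      exact (Finset.sum_range_reflect T n).symm
    have h3 : ∀ k ∈ range n, 0 ≤ T k + T (n - 1 - k) := by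
      intro k hk
      rw [mem_range] at hk
      obtain ⟨m, rfl⟩ : ∃ m, n = k + m + 1 := ⟨n - k - 1, by omega⟩
      have r1 : k + m + 1 - k = m + 1 := by omega
      have r2 : k + m + 1 - 1 - k = m := by omega
      have r3 : k + m + 1 + 1 - k = m + 2 := by omega
      have r4 : k + m + 1 - m = k + 1 := by omega
      have r5 : k + m + 1 - 1 - m = k := by omega
      have r6 : k + m + 1 + 1 - m = k + 2 := by omega
      rw [hT]
      simp only [r1, r2, r3, r4, r5, r6]
      exact pairing ν u hpos hrec k m
    have h4 : 0 ≤ ∑ k ∈ range n, (T k + T (n - 1 - k)) := Finset.sum_nonneg h3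
    linarith
  -- split the sums
  have hL : ∑ k ∈ range (n + 1), u k * u (n + 2 - k) / ((k.factorial : ℝ) * (n - k).factorial)
      = (∑ k ∈ range n,
          u (k + 1) * u (n + 1 - k) / (((k + 1).factorial : ℝ) * (n - 1 - k).factorial))
        + u 0 * u (n + 2) / ((Nat.factorial 0 : ℝ) * (n - 0).factorial) := by
    rw [Finset.sum_range_succ'
      (fun k => u k * u (n + 2 - k) / ((k.factorial : ℝ) * (n - k).factorial)) n]
    congr 1
    refine Finset.sum_congr rfl fun k hk => ?_
    rw [mem_range] at hk
    have r1 : n + 2 - (k + 1) = n + 1 - k := by omega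
    have r2 : n - (k + 1) = n - 1 - k := by omega
    rw [r1, r2]
  have hR : ∑ k ∈ range (n + 1),
        u (k + 1) * u (n + 1 - k) / ((k.factorial : ℝ) * (n - k).factorial)
      = (∑ k ∈ range n, u (k + 1) * u (n + 1 - k) / ((k.factorial : ℝ) * (n - k).factorial))
        + u (n + 1) * u 1 / ((n.factorial : ℝ) * (Nat.factorial 0 : ℝ)) := by
    rw [Finset.sum_range_succ]
    have r1 : n + 1 - n = 1 := by omega
    have r2 : n - n = 0 := by omega
    rw [r1, r2]
  -- T-sum identity
  have hTsum : ∑ k ∈ range n, T k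
      = (∑ k ∈ range n, u (k + 1) * u (n + 1 - k) / ((k.factorial : ℝ) * (n - k).factorial))
        - ∑ k ∈ range n,
            u (k + 1) * u (n + 1 - k) / (((k + 1).factorial : ℝ) * (n - 1 - k).factorial) := by
    rw [← Finset.sum_sub_distrib]
    refine Finset.sum_congr rfl fun k hk => ?_
    rw [hT]
    ring
  -- boundary term
  have hB : u 0 * u (n + 2) ≤ u (n + 1) * u 1 := by
    have e1 : u 0 = (ν + 1) * u 1 := by rw [hrec 0]; push_cast; ring
    have e2 : u (n + 1) = ((n : ℝ) + ν + 2) * u (n + 2) := by rw [hrec (n + 1)]; push_cast; ring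
    rw [e1, e2]
    have h1 := (hpos 1).le
    have h2 := (hpos (n + 2)).le
    have hn : (0:ℝ) ≤ n := Nat.cast_nonneg n
    nlinarith [mul_nonneg h1 h2]
  have hfac : (0:ℝ) < n.factorial := by exact_mod_cast n.factorial_pos
  rw [hL, hR]
  have h0 : (Nat.factorial 0 : ℝ) = 1 := by norm_num [Nat.factorial]
  rw [h0]
  have hsub : n - 0 = n := by omega
  rw [hsub]
  have hbb : u 0 * u (n + 2) / (1 * (n.factorial : ℝ))
      ≤ u (n + 1) * u 1 / ((n.factorial : ℝ) * 1) := by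
    rw [one_mul, mul_one]
    gcongr
  linarith [hM, hTsum, hbb]

private noncomputable def bTerm (ν x : ℝ) (k : ℕ) : ℝ :=
  (x / 2) ^ ((2 * k : ℝ) + ν) / ((k.factorial : ℝ) * Real.Gamma ((k : ℝ) + ν + 1))

private lemma besselI_eq (ν x : ℝ) : besselI ν x = ∑' k, bTerm ν x k := rfl

private lemma gpos {ν : ℝ} (hν : 0 ≤ ν) (k : ℕ) : 0 < Real.Gamma ((k : ℝ) + ν + 1) :=
  Real.Gamma_pos_of_pos (by positivity)

private lemma bpos {ν x : ℝ} (hν : 0 ≤ ν) (hx : 0 < x) (k : ℕ) : 0 < bTerm ν x k := by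
  have h1 : (0:ℝ) < (x / 2) ^ ((2 * k : ℝ) + ν) := Real.rpow_pos_of_pos (by linarith) _
  have h2 : (0:ℝ) < k.factorial := by exact_mod_cast k.factorial_pos
  exact div_pos h1 (mul_pos h2 (gpos hν k))

private lemma gamma_le {ν : ℝ} (hν : 0 ≤ ν) (k : ℕ) :
    Real.Gamma (ν + 1) ≤ Real.Gamma ((k : ℝ) + ν + 1) := by
  induction k with
  | zero => simp
  | succ k ih =>
    have h : ((k + 1 : ℕ) : ℝ) + ν + 1 = ((k : ℝ) + ν + 1) + 1 := by push_cast; ring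
    have hp : (0:ℝ) < (k : ℝ) + ν + 1 := by positivity
    rw [h, Real.Gamma_add_one (ne_of_gt hp)]
    calc Real.Gamma (ν + 1) ≤ Real.Gamma ((k : ℝ) + ν + 1) := ih
      _ ≤ ((k : ℝ) + ν + 1) * Real.Gamma ((k : ℝ) + ν + 1) :=
        le_mul_of_one_le_left (gpos hν k).le (by have : (0:ℝ) ≤ (k:ℝ) := Nat.cast_nonneg k; linarith)

private lemma bsummable {ν x : ℝ} (hν : 0 ≤ ν) (hx : 0 < x) : Summable (bTerm ν x) := by
  have hx2 : (0:ℝ) < x / 2 := by linarith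
  have hg : Summable (fun k : ℕ => (x / 2) ^ ν / Real.Gamma (ν + 1)
      * (((x / 2) ^ 2) ^ k / (k.factorial : ℝ))) :=
    (Real.summable_pow_div_factorial ((x / 2) ^ 2)).mul_left _
  refine Summable.of_nonneg_of_le (fun k => (bpos hν hx k).le) (fun k => ?_) hg
  have hsplit : (x / 2) ^ ((2 * k : ℝ) + ν) = ((x / 2) ^ 2) ^ k * (x / 2) ^ ν := by
    rw [Real.rpow_add hx2]
    congr 1
    rw [show ((2 * k : ℝ)) = ((2 * k : ℕ) : ℝ) by push_cast; ring, Real.rpow_natCast, pow_mul]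
  rw [bTerm, hsplit]
  have hΓν : (0:ℝ) < Real.Gamma (ν + 1) := Real.Gamma_pos_of_pos (by linarith)
  have hfk : (0:ℝ) < (k.factorial : ℝ) := by exact_mod_cast k.factorial_pos
  rw [div_le_iff₀ (by positivity)]
  have key : Real.Gamma (ν + 1) ≤ Real.Gamma ((k : ℝ) + ν + 1) := gamma_le hν k
  have hnum : (0:ℝ) ≤ ((x / 2) ^ 2) ^ k * (x / 2) ^ ν := by positivity
  have h2 : (x / 2) ^ ν / Real.Gamma (ν + 1) * (((x / 2) ^ 2) ^ k / (k.factorial : ℝ))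
      * ((k.factorial : ℝ) * Real.Gamma (ν + 1))
      = ((x / 2) ^ 2) ^ k * (x / 2) ^ ν := by
    field_simp
  calc ((x / 2) ^ 2) ^ k * (x / 2) ^ ν
      = (x / 2) ^ ν / Real.Gamma (ν + 1) * (((x / 2) ^ 2) ^ k / (k.factorial : ℝ))
        * ((k.factorial : ℝ) * Real.Gamma (ν + 1)) := h2.symm
    _ ≤ (x / 2) ^ ν / Real.Gamma (ν + 1) * (((x / 2) ^ 2) ^ k / (k.factorial : ℝ))
        * ((k.factorial : ℝ) * Real.Gamma ((k : ℝ) + ν + 1)) := by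
        have hc : (0:ℝ) ≤ (x / 2) ^ ν / Real.Gamma (ν + 1)
            * (((x / 2) ^ 2) ^ k / (k.factorial : ℝ)) := by positivity
        have := mul_le_mul_of_nonneg_left
          (mul_le_mul_of_nonneg_left key hfk.le) hc
        linarith [this]

private lemma bnormsummable {ν x : ℝ} (hν : 0 ≤ ν) (hx : 0 < x) :
    Summable (fun k => ‖bTerm ν x k‖) :=
  (bsummable hν hx).congr fun k => by
    rw [Real.norm_eq_abs, abs_of_nonneg (bpos hν hx k).le]

private lemma turan_pos {x ν : ℝ} (hx : 0 < x) (hν : 0 ≤ ν) :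
    besselI ν x * besselI (ν + 2) x ≤ besselI (ν + 1) x ^ 2 := by
  have hx2 : (0:ℝ) < x / 2 := by linarith
  set u : ℕ → ℝ := fun j => 1 / Real.Gamma ((j : ℝ) + ν + 1) with hu
  have hupos : ∀ j, 0 < u j := fun j => by
    simpa [hu] using one_div_pos.mpr (gpos hν j)
  have hurec : ∀ j, u j = ((j : ℝ) + ν + 1) * u (j + 1) := by
    intro j
    have hp : (0:ℝ) < (j : ℝ) + ν + 1 := by positivity
    have hΓ : Real.Gamma (((j + 1 : ℕ) : ℝ) + ν + 1)
        = ((j : ℝ) + ν + 1) * Real.Gamma ((j : ℝ) + ν + 1) := by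
      rw [show ((j + 1 : ℕ) : ℝ) + ν + 1 = ((j : ℝ) + ν + 1) + 1 by push_cast; ring,
        Real.Gamma_add_one (ne_of_gt hp)]
    simp only [hu, hΓ]
    rw [mul_one_div, eq_div_iff (by positivity)]
    field_simp
  -- per-n term identities
  have eL : ∀ n : ℕ, ∀ k ∈ range (n + 1),
      bTerm ν x k * bTerm (ν + 2) x (n - k)
        = (x / 2) ^ ((2 * n : ℝ) + 2 * ν + 2)
          * (u k * u (n + 2 - k) / ((k.factorial : ℝ) * (n - k).factorial)) := by
    intro n k hk
    rw [mem_range] at hk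
    have hkn : k ≤ n := by omega
    have hc1 : ((n - k : ℕ) : ℝ) = (n : ℝ) - k := by
      rw [Nat.cast_sub hkn]
    have hc2 : ((n + 2 - k : ℕ) : ℝ) = (n : ℝ) + 2 - k := by
      rw [Nat.cast_sub (by omega)]; push_cast; ring
    have hΓ : Real.Gamma (((n - k : ℕ) : ℝ) + (ν + 2) + 1)
        = Real.Gamma (((n + 2 - k : ℕ) : ℝ) + ν + 1) := by
      rw [hc1, hc2]; ring_nf
    simp only [bTerm, hu]
    rw [div_mul_div_comm, ← Real.rpow_add hx2, hΓ,
      show (2 * (k : ℝ) + ν) + (2 * ((n - k : ℕ) : ℝ) + (ν + 2)) = (2 * n : ℝ) + 2 * ν + 2 by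
        rw [hc1]; ring]
    ring
  have eR : ∀ n : ℕ, ∀ k ∈ range (n + 1),
      bTerm (ν + 1) x k * bTerm (ν + 1) x (n - k)
        = (x / 2) ^ ((2 * n : ℝ) + 2 * ν + 2)
          * (u (k + 1) * u (n + 1 - k) / ((k.factorial : ℝ) * (n - k).factorial)) := by
    intro n k hk
    rw [mem_range] at hk
    have hkn : k ≤ n := by omega
    have hc1 : ((n - k : ℕ) : ℝ) = (n : ℝ) - k := by rw [Nat.cast_sub hkn]
    have hc2 : ((n + 1 - k : ℕ) : ℝ) = (n : ℝ) + 1 - k := by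
      rw [Nat.cast_sub (by omega)]; push_cast; ring
    have hΓ1 : Real.Gamma ((k : ℝ) + (ν + 1) + 1)
        = Real.Gamma (((k + 1 : ℕ) : ℝ) + ν + 1) := by push_cast; ring_nf
    have hΓ2 : Real.Gamma (((n - k : ℕ) : ℝ) + (ν + 1) + 1)
        = Real.Gamma (((n + 1 - k : ℕ) : ℝ) + ν + 1) := by rw [hc1, hc2]; ring_nf
    simp only [bTerm, hu]
    rw [div_mul_div_comm, ← Real.rpow_add hx2, hΓ1, hΓ2,
      show (2 * (k : ℝ) + (ν + 1)) + (2 * ((n - k : ℕ) : ℝ) + (ν + 1))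
          = (2 * n : ℝ) + 2 * ν + 2 by rw [hc1]; ring]
    ring
  have key : ∀ n : ℕ,
      ∑ k ∈ range (n + 1), bTerm ν x k * bTerm (ν + 2) x (n - k)
        ≤ ∑ k ∈ range (n + 1), bTerm (ν + 1) x k * bTerm (ν + 1) x (n - k) := by
    intro n
    rw [Finset.sum_congr rfl (eL n), Finset.sum_congr rfl (eR n),
      ← Finset.mul_sum, ← Finset.mul_sum]
    exact mul_le_mul_of_nonneg_left (core ν u hupos hurec hν n)
      (Real.rpow_nonneg hx2.le _)
  have h1 := bnormsummable hν hx
  have h2 := bnormsummable (by linarith : (0:ℝ) ≤ ν + 2) hx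
  have h3 := bnormsummable (by linarith : (0:ℝ) ≤ ν + 1) hx
  rw [besselI_eq, besselI_eq, besselI_eq, sq,
    tsum_mul_tsum_eq_tsum_sum_range_of_summable_norm h1 h2,
    tsum_mul_tsum_eq_tsum_sum_range_of_summable_norm h3 h3]
  exact Summable.tsum_le_tsum key (summable_norm_sum_mul_range_of_summable_norm h1 h2).of_norm
    (summable_norm_sum_mul_range_of_summable_norm h3 h3).of_norm

private lemma besselI_pos {ν x : ℝ} (hν : 0 ≤ ν) (hx : 0 < x) : 0 < besselI ν x := by
  rw [besselI_eq]
  exact Summable.tsum_pos (bsummable hν hx) (fun k => (bpos hν hx k).le) 0 (bpos hν hx 0)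

/-- Turán-type inequality `I_{ν+1}(x)² ≥ I_ν(x) I_{ν+2}(x)` for `x ≥ 0`, `ν ≥ 0`;
consequently the Barut–Girardello Mandel parameter
`Q = α[I_{2ς+1}(2α)/I_{2ς}(2α) - I_{2ς}(2α)/I_{2ς-1}(2α)]` is `≤ 0` for all `α > 0`,
`ς ≥ 1/2`. -/
theorem stmt15 :
    (∀ x : ℝ, 0 ≤ x → ∀ ν : ℝ, 0 ≤ ν →
      besselI ν x * besselI (ν + 2) x ≤ (besselI (ν + 1) x) ^ 2) ∧
    (∀ α : ℝ, 0 < α → ∀ ς : ℝ, 1 / 2 ≤ ς →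
      α * (besselI (2 * ς + 1) (2 * α) / besselI (2 * ς) (2 * α)
        - besselI (2 * ς) (2 * α) / besselI (2 * ς - 1) (2 * α)) ≤ 0) := by
  have turan : ∀ x : ℝ, 0 ≤ x → ∀ ν : ℝ, 0 ≤ ν →
      besselI ν x * besselI (ν + 2) x ≤ (besselI (ν + 1) x) ^ 2 := by
    intro x hx ν hν
    rcases eq_or_lt_of_le hx with h | h
    · have hz : besselI (ν + 2) 0 = 0 := by
        rw [besselI_eq]
        have : ∀ k : ℕ, bTerm (ν + 2) 0 k = 0 := by
          intro k
          rw [bTerm]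
          have : ((0:ℝ) / 2) ^ ((2 * k : ℝ) + (ν + 2)) = 0 := by
            rw [show (0:ℝ)/2 = 0 by norm_num]
            exact Real.zero_rpow (by positivity)
          rw [this, zero_div]
        simp [this]
      rw [← h, hz, mul_zero]
      exact sq_nonneg _
    · exact turan_pos h hν
  refine ⟨turan, ?_⟩
  intro α hα ς hς
  have hν : (0:ℝ) ≤ 2 * ς - 1 := by linarith
  have hx : (0:ℝ) < 2 * α := by linarith
  have h1 : besselI (2 * ς - 1) (2 * α) * besselI (2 * ς + 1) (2 * α)
      ≤ besselI (2 * ς) (2 * α) ^ 2 := by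
    have := turan (2 * α) hx.le (2 * ς - 1) hν
    rw [show 2 * ς - 1 + 2 = 2 * ς + 1 by ring, show 2 * ς - 1 + 1 = 2 * ς by ring] at this
    exact this
  have p1 : 0 < besselI (2 * ς - 1) (2 * α) := besselI_pos hν hx
  have p2 : 0 < besselI (2 * ς) (2 * α) := besselI_pos (by linarith) hx
  have p3 : 0 < besselI (2 * ς + 1) (2 * α) := besselI_pos (by linarith) hx
  have hd : besselI (2 * ς + 1) (2 * α) / besselI (2 * ς) (2 * α)
      - besselI (2 * ς) (2 * α) / besselI (2 * ς - 1) (2 * α) ≤ 0 := by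
    have : besselI (2 * ς + 1) (2 * α) / besselI (2 * ς) (2 * α)
        ≤ besselI (2 * ς) (2 * α) / besselI (2 * ς - 1) (2 * α) := by
      rw [div_le_div_iff₀ p2 p1]
      nlinarith [h1]
    linarith
  exact mul_nonpos_iff.mpr (Or.inl ⟨hα.le, hd⟩)
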